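/- For any k ∈ ℕ and any d×d tail-dependence matrices Λ_1, ..., Λ_k, the Hadamard (entrywise) product Λ_1 ∘ ⋯ ∘ Λ_k is a tail-dependence matrix (Proposition 3.4). -/

import Mathlib

/-!
If `X` and `Y` are independent and uniform on `[0,1]`, then `P(max X Y ≤ t) = t²`, so
`Z = (max X Y)²` is again uniform. Taking two random vectors `X`, `Y` with tail-dependence
matrices `A`, `B` on a product space and setting `Zᵢ = (max Xᵢ Yᵢ)²`, for `u > 0` we get
`P(Zᵢ ≤ u, Zⱼ ≤ u) / u = (P(Xᵢ ≤ √u, Xⱼ ≤ √u) / √u) · (P(Yᵢ ≤ √u, Yⱼ ≤ √u) / √u)`, which tends to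
`Aᵢⱼ Bᵢⱼ`. Hence tail-dependence matrices are closed under the Hadamard product; the all-ones
matrix is one (take all components equal), and the theorem follows by induction.
-/

open MeasureTheory ProbabilityTheory Filter Set

noncomputable section

/-- A Bernoulli-compatible matrix: `B i j = E[X i * X j]` for some random vector `X`
taking values in `{0,1}^d` on some probability space. -/
def IsBernoulliCompatible {d : ℕ} (B : Matrix (Fin d) (Fin d) ℝ) : Prop :=
  ∃ (Ω : Type) (_ : MeasurableSpace Ω) (μ : Measure Ω),
    IsProbabilityMeasure μ ∧
    ∃ X : Ω → Fin d → ℝ, Measurable X ∧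
      (∀ ω i, X ω i = 0 ∨ X ω i = 1) ∧
      (∀ i j, B i j = ∫ ω, X ω i * X ω j ∂μ)

/-- The (lower) tail-dependence coefficient of `Yi` and `Yj` exists and equals `l`:
`P(Yi ≤ u, Yj ≤ u)/u → l` as `u ↓ 0`. -/
def HasTailDepCoeff {Ω : Type} [MeasurableSpace Ω] (μ : Measure Ω)
    (Yi Yj : Ω → ℝ) (l : ℝ) : Prop :=
  Filter.Tendsto (fun u : ℝ => (μ {ω | Yi ω ≤ u ∧ Yj ω ≤ u}).toReal / u)
    (nhdsWithin 0 (Set.Ioi 0)) (nhds l)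

/-- The uniform distribution on `[0,1]`. -/
def stdUniform : Measure ℝ := volume.restrict (Set.Icc (0:ℝ) 1)

/-- A tail-dependence matrix: the matrix of pairwise (lower) tail-dependence coefficients
of some random vector with standard uniform margins. -/
def IsTailDependenceMatrix {d : ℕ} (Λ : Matrix (Fin d) (Fin d) ℝ) : Prop :=
  ∃ (Ω : Type) (_ : MeasurableSpace Ω) (μ : Measure Ω),
    IsProbabilityMeasure μ ∧
    ∃ Y : Ω → Fin d → ℝ, Measurable Y ∧
      (∀ i, μ.map (fun ω => Y ω i) = stdUniform) ∧
      (∀ i j, HasTailDepCoeff μ (fun ω => Y ω i) (fun ω => Y ω j) (Λ i j))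

open scoped Topology Matrix

instance : IsProbabilityMeasure stdUniform := by
  constructor
  rw [stdUniform, Measure.restrict_apply_univ, Real.volume_Icc]
  norm_num

-- For `s < 0` both sides vanish, since `ENNReal.ofReal` truncates negative reals to `0`.
lemma stdUniform_Iic (s : ℝ) : stdUniform (Iic s) = ENNReal.ofReal (min s 1) := by
  have hIcc : Iic s ∩ Icc (0 : ℝ) 1 = Icc 0 (min s 1) := by
    ext x
    simp only [mem_inter_iff, mem_Iic, mem_Icc, le_min_iff]
    tauto
  rw [stdUniform, Measure.restrict_apply measurableSet_Iic, hIcc, Real.volume_Icc, sub_zero]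

lemma map_eq_stdUniform_iff {Ω : Type*} [MeasurableSpace Ω] {μ : Measure Ω} {Y : Ω → ℝ}
    (hY : Measurable Y) :
    μ.map Y = stdUniform ↔ ∀ s, μ {ω | Y ω ≤ s} = ENNReal.ofReal (min s 1) := by
  simp only [← stdUniform_Iic]
  constructor
  · intro h s
    rw [← h, Measure.map_apply hY measurableSet_Iic]
    rfl
  · intro h
    refine (Measure.ext_of_Iic _ _ fun s => ?_).symm
    rw [Measure.map_apply hY measurableSet_Iic, ← h]
    rfl

lemma tendsto_sqrt_nhdsGT_zero : Tendsto Real.sqrt (𝓝[>] 0) (𝓝[>] 0) :=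
  tendsto_nhdsWithin_of_tendsto_nhds_of_eventually_within _
    ((Real.continuous_sqrt.tendsto' 0 0 Real.sqrt_zero).mono_left nhdsWithin_le_nhds)
    (eventually_nhdsWithin_of_forall fun _ hu => Real.sqrt_pos.mpr hu)

lemma min_sqrt_one_mul_self {t : ℝ} (ht : 0 ≤ t) : min √t 1 * min √t 1 = min t 1 := by
  rcases le_total t 1 with h | h
  · rw [min_eq_left (Real.sqrt_le_one.mpr h), min_eq_left h, Real.mul_self_sqrt ht]
  · rw [min_eq_right (Real.one_le_sqrt.mpr h), min_eq_right h, mul_one]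

lemma isTailDependenceMatrix_ones {d : ℕ} :
    IsTailDependenceMatrix (Matrix.of fun _ _ : Fin d => (1 : ℝ)) := by
  refine ⟨ℝ, inferInstance, stdUniform, inferInstance, fun ω _ => ω,
    measurable_pi_lambda _ fun _ => measurable_id, fun _ => Measure.map_id, fun _ _ => ?_⟩
  refine tendsto_const_nhds.congr' ?_
  filter_upwards [self_mem_nhdsWithin,
    eventually_nhdsWithin_of_eventually_nhds (eventually_lt_nhds zero_lt_one)] with u hu hu1
  have hu0 : (0 : ℝ) < u := hu
  have hIic : {ω : ℝ | ω ≤ u ∧ ω ≤ u} = Iic u := by simp only [and_self]; rfl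
  rw [hIic, stdUniform_Iic, min_eq_left hu1.le, ENNReal.toReal_ofReal hu0.le, div_self hu0.ne',
    Matrix.of_apply]

-- Clamping at `0` makes `maxSq` monotone on all of `ℝ`, which gives `maxSq_le_iff`.
def maxSq (a b : ℝ) : ℝ := max (max a b) 0 ^ 2

lemma maxSq_le_iff {a b u : ℝ} (hu : 0 ≤ u) : maxSq a b ≤ u ↔ a ≤ √u ∧ b ≤ √u := by
  rw [maxSq, ← Real.le_sqrt (le_max_right _ _) hu, max_le_iff, max_le_iff,
    and_iff_left (Real.sqrt_nonneg u)]

lemma maxSq_nonneg (a b : ℝ) : 0 ≤ maxSq a b := sq_nonneg _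

lemma Measurable.maxSq {α : Type*} [MeasurableSpace α] {f g : α → ℝ} (hf : Measurable f)
    (hg : Measurable g) : Measurable fun x => _root_.maxSq (f x) (g x) :=
  ((hf.max hg).max measurable_const).pow_const 2

section Product

variable {Ω₁ Ω₂ : Type} [MeasurableSpace Ω₁] [MeasurableSpace Ω₂]
  {μ₁ : Measure Ω₁} {μ₂ : Measure Ω₂}

lemma map_maxSq_prod_eq_stdUniform [SFinite μ₂] {X : Ω₁ → ℝ} {Y : Ω₂ → ℝ}
    (hX : Measurable X) (hY : Measurable Y)
    (hXU : μ₁.map X = stdUniform) (hYU : μ₂.map Y = stdUniform) :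
    (μ₁.prod μ₂).map (fun ω => maxSq (X ω.1) (Y ω.2)) = stdUniform := by
  have hZ : Measurable fun ω : Ω₁ × Ω₂ => maxSq (X ω.1) (Y ω.2) :=
    (hX.comp measurable_fst).maxSq (hY.comp measurable_snd)
  rw [map_eq_stdUniform_iff hZ]
  rw [map_eq_stdUniform_iff hX] at hXU
  rw [map_eq_stdUniform_iff hY] at hYU
  intro t
  rcases lt_or_ge t 0 with ht | ht
  · have hempty : {ω : Ω₁ × Ω₂ | maxSq (X ω.1) (Y ω.2) ≤ t} = ∅ :=
      eq_empty_of_forall_notMem fun ω hω => (maxSq_nonneg _ _).not_gt (lt_of_le_of_lt hω ht)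
    rw [hempty, measure_empty, ENNReal.ofReal_of_nonpos (min_le_of_left_le ht.le)]
  · have hprod : {ω : Ω₁ × Ω₂ | maxSq (X ω.1) (Y ω.2) ≤ t} =
        {ω₁ | X ω₁ ≤ √t} ×ˢ {ω₂ | Y ω₂ ≤ √t} := by
      ext ω
      simp only [mem_ofPred_eq, mem_prod, maxSq_le_iff ht]
    rw [hprod, Measure.prod_prod, hXU, hYU, ← ENNReal.ofReal_mul (by positivity),
      min_sqrt_one_mul_self ht]

lemma hasTailDepCoeff_maxSq_prod [SFinite μ₂] {X₁ X₂ : Ω₁ → ℝ} {Y₁ Y₂ : Ω₂ → ℝ} {a b : ℝ}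
    (hX : HasTailDepCoeff μ₁ X₁ X₂ a) (hY : HasTailDepCoeff μ₂ Y₁ Y₂ b) :
    HasTailDepCoeff (μ₁.prod μ₂) (fun ω => maxSq (X₁ ω.1) (Y₁ ω.2))
      (fun ω => maxSq (X₂ ω.1) (Y₂ ω.2)) (a * b) := by
  refine ((hX.comp tendsto_sqrt_nhdsGT_zero).mul (hY.comp tendsto_sqrt_nhdsGT_zero)).congr' ?_
  filter_upwards [self_mem_nhdsWithin] with u (hu : 0 < u)
  have hprod : {ω : Ω₁ × Ω₂ | maxSq (X₁ ω.1) (Y₁ ω.2) ≤ u ∧ maxSq (X₂ ω.1) (Y₂ ω.2) ≤ u} =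
      {ω₁ | X₁ ω₁ ≤ √u ∧ X₂ ω₁ ≤ √u} ×ˢ {ω₂ | Y₁ ω₂ ≤ √u ∧ Y₂ ω₂ ≤ √u} := by
    ext ω
    simp only [mem_ofPred_eq, mem_prod, maxSq_le_iff hu.le]
    tauto
  rw [Function.comp_apply, Function.comp_apply, hprod, Measure.prod_prod, ENNReal.toReal_mul,
    div_mul_div_comm, Real.mul_self_sqrt hu.le]

end Product

lemma IsTailDependenceMatrix.hadamard {d : ℕ} {A B : Matrix (Fin d) (Fin d) ℝ}
    (hA : IsTailDependenceMatrix A) (hB : IsTailDependenceMatrix B) :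
    IsTailDependenceMatrix (A ⊙ B) := by
  obtain ⟨Ω₁, _, μ₁, hμ₁, X, hX, hXU, hXA⟩ := hA
  obtain ⟨Ω₂, _, μ₂, hμ₂, Y, hY, hYU, hYB⟩ := hB
  have hXi (i : Fin d) : Measurable fun ω => X ω i := (measurable_pi_apply i).comp hX
  have hYi (i : Fin d) : Measurable fun ω => Y ω i := (measurable_pi_apply i).comp hY
  refine ⟨Ω₁ × Ω₂, inferInstance, μ₁.prod μ₂, inferInstance,
    fun ω i => maxSq (X ω.1 i) (Y ω.2 i),
    measurable_pi_lambda _ fun i => ((hXi i).comp measurable_fst).maxSq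
      ((hYi i).comp measurable_snd),
    fun i => map_maxSq_prod_eq_stdUniform (hXi i) (hYi i) (hXU i) (hYU i),
    -- elaborated without the expected type, against which higher-order unification is very slow
    fun i j => (hasTailDepCoeff_maxSq_prod (hXA i j) (hYB i j) :)⟩

/-- Proposition 3.4: the Hadamard (entrywise) product of finitely many tail-dependence
matrices is a tail-dependence matrix. -/
theorem tail_dependence_hadamard_prod {d k : ℕ} (Λ : Fin k → Matrix (Fin d) (Fin d) ℝ)
    (hΛ : ∀ l, IsTailDependenceMatrix (Λ l)) :
    IsTailDependenceMatrix (Matrix.of fun i j => ∏ l, Λ l i j) := by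
  -- In the pi type `Fin d → Fin d → ℝ` multiplication is entrywise, i.e. the Hadamard product.
  have hprod := Finset.prod_induction (s := Finset.univ)
    (fun l i j => Λ l i j : Fin k → Fin d → Fin d → ℝ) (fun M => IsTailDependenceMatrix (Matrix.of M))
    (fun _ _ hA hB => hA.hadamard hB) isTailDependenceMatrix_ones (fun l _ => hΛ l)
  simpa only [Finset.prod_fn] using hprod
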